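/- Let G be a 2-edge-connected graph with \delta(G) > (\alpha(G) + 4)/2, let e be an edge of G and let G' = G - e. If X is a vertex subset of G' with |X| \geq 2 satisfying sun(G' - X) \geq 2|X| - \varepsilon(X) + 1, then \delta(G) \leq |X| + 1. -/

import Mathlib

open SimpleGraph

section Defs

variable {V : Type*} {α β : Type*}

/-- A graph is *factor-critical* if deleting any vertex leaves a graph
with a perfect matching. -/
def FactorCritical (G : SimpleGraph V) : Prop :=
  ∀ v : V, ∃ M : (G.induce {u | u ≠ v}).Subgraph, M.IsPerfectMatching

/-- A *sun* is `K₁`, `K₂`, or a graph obtained from a factor-critical graph `R`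
with vertex set `Y = {y₁, …, yₙ}` by adding `n` new vertices `x₁, …, xₙ` and the
pendant edges `y₁x₁, …, yₙxₙ`. -/
def IsSun (G : SimpleGraph V) : Prop :=
  (Nat.card V = 1) ∨ (Nat.card V = 2 ∧ G.Connected) ∨
  (∃ Y : Set V, Y.Nonempty ∧ FactorCritical (G.induce Y) ∧
    ∃ f : (Yᶜ : Set V) ≃ Y, ∀ x : (Yᶜ : Set V), G.neighborSet ↑x = {(↑(f x) : V)})

/-- `sunCount G` is the number of connected components of `G` that are suns. -/
noncomputable def sunCount (G : SimpleGraph V) : ℕ :=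
  Nat.card {c : G.ConnectedComponent // IsSun (G.induce c.supp)}

/-- Number of isolated vertices of a graph. -/
noncomputable def isolatedCount (G : SimpleGraph V) : ℕ :=
  {v : V | ∀ w : V, ¬ G.Adj v w}.ncard

/-- A set of vertices is independent if no two of its vertices are adjacent. -/
def IndepSet (G : SimpleGraph V) (A : Set V) : Prop :=
  A.Pairwise fun u v => ¬ G.Adj u v

/-- The independence number of a graph: the maximum size of an independent set. -/
noncomputable def indepNum (G : SimpleGraph V) : ℕ :=
  sSup {n | ∃ A : Set V, IndepSet G A ∧ A.ncard = n}

/-- The neighborhood `N_G(A)` of a set `A` of vertices: the union of the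
neighborhoods of the vertices of `A`. -/
def neighborSetOf (G : SimpleGraph V) (A : Set V) : Set V :=
  {v | ∃ a ∈ A, G.Adj a v}

/-- `H` is a `P_{≥3}`-factor of `G`: a spanning subgraph of `G` each of whose
connected components is a path on at least `3` vertices. -/
def IsPathFactor (G H : SimpleGraph V) : Prop :=
  H ≤ G ∧ ∀ c : H.ConnectedComponent,
    ∃ n : ℕ, 3 ≤ n ∧ Nonempty ((H.induce c.supp) ≃g pathGraph n)

/-- A connected graph `G` is a `P_{≥3}`-factor covered graph if every edge of `G`
is contained in some `P_{≥3}`-factor of `G`. -/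
def PathFactorCovered (G : SimpleGraph V) : Prop :=
  G.Connected ∧ ∀ e ∈ G.edgeSet, ∃ H : SimpleGraph V, IsPathFactor G H ∧ e ∈ H.edgeSet

/-- A graph `G` is a `P_{≥3}`-factor uniform graph if `G - e` is a
`P_{≥3}`-factor covered graph for every edge `e` of `G`. -/
def PathFactorUniform (G : SimpleGraph V) : Prop :=
  ∀ e ∈ G.edgeSet, PathFactorCovered (G.deleteEdges {e})

/-- The parameter `ε(X)` from Zhou–Zhang's characterization of
`P_{≥3}`-factor covered graphs. -/
noncomputable def eps (G : SimpleGraph V) (X : Set V) : ℕ := by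
  classical
  exact if ¬ IndepSet G X then 2
    else if X.Nonempty ∧ ∃ c : (G.induce Xᶜ).ConnectedComponent,
        ¬ IsSun ((G.induce Xᶜ).induce c.supp) then 1
    else 0

/-- A graph is 2-edge-connected if it is connected and stays connected after
the deletion of any single edge. -/
def TwoEdgeConnected (G : SimpleGraph V) : Prop :=
  G.Connected ∧ ∀ e ∈ G.edgeSet, (G.deleteEdges {e}).Connected

/-- A graph is `k`-connected if it has more than `k` vertices and remains
connected after deleting any fewer than `k` vertices. -/
def KConnected [Fintype V] (k : ℕ) (G : SimpleGraph V) : Prop :=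
  k < Fintype.card V ∧ ∀ S : Set V, S.ncard < k → (G.induce Sᶜ).Connected

/-- The join `G₁ ∨ G₂` of two graphs: take disjoint copies of `G₁` and `G₂`
and add all edges between them. -/
def graphJoin (G : SimpleGraph α) (H : SimpleGraph β) : SimpleGraph (α ⊕ β) where
  Adj x y :=
    match x, y with
    | Sum.inl a, Sum.inl b => G.Adj a b
    | Sum.inr a, Sum.inr b => H.Adj a b
    | Sum.inl _, Sum.inr _ => True
    | Sum.inr _, Sum.inl _ => True
  symm := ⟨by
    rintro (a | a) (b | b) h
    · exact G.adj_symm h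
    · trivial
    · trivial
    · exact H.adj_symm h⟩
  loopless := ⟨by
    rintro (a | a) h
    · exact G.loopless.irrefl a h
    · exact H.loopless.irrefl a h⟩

/-- The disjoint union of two graphs. -/
def graphSum (G : SimpleGraph α) (H : SimpleGraph β) : SimpleGraph (α ⊕ β) where
  Adj x y :=
    match x, y with
    | Sum.inl a, Sum.inl b => G.Adj a b
    | Sum.inr a, Sum.inr b => H.Adj a b
    | _, _ => False
  symm := ⟨by
    rintro (a | a) (b | b) h
    · exact G.adj_symm h
    · exact h.elim
    · exact h.elim
    · exact H.adj_symm h⟩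
  loopless := ⟨by
    rintro (a | a) h
    · exact G.loopless.irrefl a h
    · exact H.loopless.irrefl a h⟩

/-- `mK2 m` is the disjoint union of `m` copies of `K₂`. -/
def mK2 (m : ℕ) : SimpleGraph (Fin m × Fin 2) where
  Adj p q := p.1 = q.1 ∧ p.2 ≠ q.2
  symm := ⟨by rintro p q ⟨h1, h2⟩; exact ⟨h1.symm, h2.symm⟩⟩
  loopless := ⟨by rintro p ⟨h1, h2⟩; exact h2 rfl⟩

end Defs

/-! Since `ε(X) ≤ 2` and `|X| ≥ 2`, the graph `G' - X` has at least three sun components.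
Every sun has a vertex of degree at most one, so some sun component avoiding both ends of `e`
contains a vertex `v` with at most one `G`-neighbour outside `X`, whence
`δ(G) ≤ deg v ≤ |X| + 1`. -/

theorem IsSun.exists_neighborSet_subsingleton {W : Type*} {K : SimpleGraph W} (h : IsSun K) :
    ∃ v, (K.neighborSet v).Subsingleton := by
  rcases h with hcard | ⟨hcard, -⟩ | ⟨Y, ⟨y, hy⟩, -, f, hf⟩
  · obtain ⟨hsub, ⟨v⟩⟩ := Nat.card_eq_one_iff_unique.mp hcard
    exact ⟨v, Set.subsingleton_of_subsingleton⟩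
  · obtain ⟨x, y, -, huniv⟩ := Nat.card_eq_two_iff.mp hcard
    refine ⟨x, fun w₁ hw₁ w₂ hw₂ => ?_⟩
    have hmem : ∀ w, K.Adj x w → w = y := fun w hw =>
      ((huniv ▸ Set.mem_univ w : w ∈ ({x, y} : Set W))).resolve_left hw.ne.symm
    rw [hmem w₁ hw₁, hmem w₂ hw₂]
  · -- the pendant vertex attached to `y`
    refine ⟨f.symm ⟨y, hy⟩, ?_⟩
    rw [hf]
    exact Set.subsingleton_singleton

namespace SimpleGraph

variable {V : Type*}

theorem ConnectedComponent.exists_mem_supp_neighborSet_subsingleton {G : SimpleGraph V}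
    (c : G.ConnectedComponent) (h : IsSun (G.induce c.supp)) :
    ∃ v ∈ c.supp, (G.neighborSet v).Subsingleton := by
  obtain ⟨⟨v, hv⟩, hsub⟩ := h.exists_neighborSet_subsingleton
  refine ⟨v, hv, fun w₁ hw₁ w₂ hw₂ => ?_⟩
  have h₁ : (⟨w₁, c.mem_supp_of_adj_mem_supp hv hw₁⟩ : c.supp) =
      ⟨w₂, c.mem_supp_of_adj_mem_supp hv hw₂⟩ := hsub (by exact hw₁) (by exact hw₂)
  exact congrArg Subtype.val h₁

theorem exists_ne_ne_of_three_le_sunCount {W : Type*} {H : SimpleGraph W} (h : 3 ≤ sunCount H)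
    (g : W → V) (hg : g.Injective) (a b : V) :
    ∃ v, g v ≠ a ∧ g v ≠ b ∧ (H.neighborSet v).Subsingleton := by
  choose p hp using fun c : {c : H.ConnectedComponent // IsSun (H.induce c.supp)} =>
    c.1.exists_mem_supp_neighborSet_subsingleton c.2
  by_contra! hcon
  let q : {c : H.ConnectedComponent // IsSun (H.induce c.supp)} → ({a, b} : Set V) :=
    fun c => ⟨g (p c), by
      by_cases hpa : g (p c) = a
      · exact Or.inl hpa
      · exact Or.inr (by_contra fun hpb => (hcon _ hpa hpb).not_subsingleton (hp c).2)⟩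
  have hq : q.Injective := fun c₁ c₂ hc => by
    have hpc : p c₁ = p c₂ := hg (congrArg Subtype.val hc)
    exact Subtype.ext ((hp c₁).1.symm.trans (hpc ▸ (hp c₂).1))
  have hcard := Nat.card_le_card_of_injective q hq
  rw [Nat.card_coe_set_eq] at hcard
  have hpair := Set.ncard_insert_le a {b}
  rw [Set.ncard_singleton] at hpair
  unfold sunCount at h
  omega

theorem neighborSet_inter_subsingleton_of_induce {G : SimpleGraph V} {s : Set V} {v : s}
    (h : ((G.induce s).neighborSet v).Subsingleton) :
    (G.neighborSet v ∩ s).Subsingleton := fun w₁ hw₁ w₂ hw₂ =>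
  congrArg Subtype.val (h (show (G.induce s).Adj v ⟨w₁, hw₁.2⟩ from hw₁.1)
    (show (G.induce s).Adj v ⟨w₂, hw₂.2⟩ from hw₂.1))

theorem neighborSet_deleteEdges_pair {G : SimpleGraph V} {a b v : V} (ha : v ≠ a) (hb : v ≠ b) :
    (G.deleteEdges {s(a, b)}).neighborSet v = G.neighborSet v := by
  ext w
  simp [ha, hb]

end SimpleGraph

theorem eps_le_two {V : Type*} (G : SimpleGraph V) (X : Set V) : eps G X ≤ 2 := by
  unfold eps
  split_ifs <;> omega

theorem Set.ncard_le_ncard_add_one_of_subsingleton_sdiff {α : Type*} {s t : Set α} [Finite α]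
    (h : (s \ t).Subsingleton) : s.ncard ≤ t.ncard + 1 := by
  have := Set.ncard_le_ncard_sdiff_add_ncard s t
  have := Set.ncard_le_one_iff_subsingleton.mpr h
  omega

theorem stmt10_general {V : Type*} [Fintype V] (G : SimpleGraph V) [DecidableRel G.Adj]
    (e : Sym2 V) (X : Set V) (hX2 : 2 ≤ X.ncard)
    (hX : (sunCount ((G.deleteEdges {e}).induce Xᶜ) : ℤ) ≥
      2 * X.ncard - eps (G.deleteEdges {e}) X + 1) :
    G.minDegree ≤ X.ncard + 1 := by
  induction e using Sym2.ind with | _ a b => ?_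
  have hsun : 3 ≤ sunCount ((G.deleteEdges {s(a, b)}).induce Xᶜ) := by
    have := eps_le_two (G.deleteEdges {s(a, b)}) X
    omega
  obtain ⟨v, hva, hvb, hv⟩ := exists_ne_ne_of_three_le_sunCount hsun Subtype.val
    Subtype.val_injective a b
  have hN : (G.neighborSet v \ X).Subsingleton := by
    rw [Set.sdiff_eq, ← neighborSet_deleteEdges_pair hva hvb]
    exact neighborSet_inter_subsingleton_of_induce hv
  calc G.minDegree ≤ G.degree v := G.minDegree_le_degree _
    _ = (G.neighborSet v).ncard := by
      rw [← card_neighborSet_eq_degree, ← Nat.card_eq_fintype_card, Nat.card_coe_set_eq]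
    _ ≤ X.ncard + 1 := Set.ncard_le_ncard_add_one_of_subsingleton_sdiff hN

/-- **Claim 3 in the proof of Theorem 1.3.** Let `G` be 2-edge-connected with
`δ(G) > (α(G)+4)/2`, let `e ∈ E(G)` and `G' = G - e`. If `X ⊆ V(G')` with `|X| ≥ 2`
satisfies `sun(G' - X) ≥ 2|X| - ε(X) + 1`, then `δ(G) ≤ |X| + 1`. -/
theorem stmt10 {V : Type*} [Fintype V] (G : SimpleGraph V) [DecidableRel G.Adj]
    (h2ec : TwoEdgeConnected G)
    (hdeg : (G.minDegree : ℝ) > ((_root_.indepNum G : ℝ) + 4) / 2)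
    (e : Sym2 V) (he : e ∈ G.edgeSet) (X : Set V) (hX2 : 2 ≤ X.ncard)
    (hX : (sunCount ((G.deleteEdges {e}).induce Xᶜ) : ℤ) ≥
      2 * X.ncard - eps (G.deleteEdges {e}) X + 1) :
    G.minDegree ≤ X.ncard + 1 :=
  stmt10_general G e X hX2 hX
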